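/- Exact cavity recursion: for the majority process on the rooted tree G_∘ (root of degree k−1, all other vertices of degree k) with external field u applied at the root, the law of the root trajectory satisfies P((σ_∘)_0^{T+1} || u_0^{T+1}) = P_0(σ_∘(0)) Σ_{(σ_1)_0^T,…,(σ_{k−1})_0^T} Π_{t=0}^T K_{u(t)}(σ_∘(t+1) | σ_{∂∘}(t)) Π_{i=1}^{k−1} P((σ_i)_0^T || (σ_∘)_0^T), where K_{u}(σ'|σ_{∂∘}) equals the indicator that σ' = sign(Σ_i σ_i + u) when the argument is nonzero and equals 1/2 otherwise. -/

import Mathlib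

open MeasureTheory ProbabilityTheory

/-- Vertices of the rooted tree in which the root has c children and every other
vertex has one parent and c children (so for c = k−1 this is the tree G_∘ with root
degree k−1 and all other degrees k).  The root is the empty list, and the children of
`i` are the vertices `j :: i` for j : Fin c. -/
abbrev TVert (c : ℕ) := List (Fin c)

/-- One step of the majority dynamics on the rooted tree under external field u at the
root: every vertex takes the sign of the sum of its children's spins, plus its
parent's spin (for non-root vertices) or the external field u (for the root); ties are
broken by the coin. -/
noncomputable def treeStep (c : ℕ) (u : ℝ) (coin : TVert c → Bool)
    (σ : TVert c → ℤ) (i : TVert c) : ℤ :=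
  let s : ℝ := (∑ j : Fin c, (σ (j :: i) : ℝ)) +
    (match i with | [] => u | _ :: p => (σ p : ℝ))
  if 0 < s then 1 else if s < 0 then -1 else if coin i then σ i else -σ i

/-- Trajectory of the rooted-tree majority dynamics under the external field
sequence u. -/
noncomputable def treeTraj (c : ℕ) (u : ℕ → ℝ) (coins : ℕ → TVert c → Bool)
    (σ0 : TVert c → ℤ) : ℕ → TVert c → ℤ
  | 0 => σ0
  | t + 1 => treeStep c (u t) (coins t) (treeTraj c u coins σ0 t)

/-- The probability, under the law μ of (initial spins, tie-breaking coins), that the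
root trajectory up to time T equals ω, when the dynamics is driven by the external
field u at the root. -/
noncomputable def rootProb (c : ℕ)
    (μ : MeasureTheory.Measure ((TVert c → Bool) × (ℕ → TVert c → Bool)))
    (T : ℕ) (u : ℕ → ℝ) (ω : ℕ → ℤ) : ℝ :=
  (μ {x | ∀ t ≤ T,
    treeTraj c u x.2 (fun v => if x.1 v then 1 else -1) t List.nil = ω t}).toReal

/-- The transition kernel K_u(next | s): if s + u ≠ 0 the next root spin is
deterministically sign(s+u); otherwise it is ±1 with probability 1/2 each. -/
noncomputable def Kker (u : ℝ) (next : ℤ) (s : ℝ) : ℝ :=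
  if s + u ≠ 0 then (if (next : ℝ) = (if 0 < s + u then 1 else -1) then 1 else 0)
  else 1 / 2

/-- Spin value (±1 : ℝ) encoded by a Boolean trajectory, read at time t (out of range
values are irrelevant and set to 1). -/
noncomputable def btrajR {n : ℕ} (f : Fin n → Bool) (t : ℕ) : ℝ :=
  if h : t < n then (if f ⟨t, h⟩ then 1 else -1) else 1

/-- Spin value (±1 : ℤ) encoded by a Boolean trajectory. -/
noncomputable def btrajZ {n : ℕ} (f : Fin n → Bool) (t : ℕ) : ℤ :=
  if h : t < n then (if f ⟨t, h⟩ then 1 else -1) else 1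

/-!
Up to time `T` the root spin only depends on the initial spins and coins at depth at most `T`
(finite speed of propagation), and as long as the root follows `ωr`, the subtree below the
root's child `i` evolves as a copy of the rooted process driven by the external field `ωr`.
So the event that the root follows `ωr` up to time `T + 1` is the disjoint union, over the
children's trajectories `τ`, of the intersections of three kinds of events: the initial root
spin, the root's update at each time `t ≤ T` (where only the coin is random once `τ` is fixed),
and the `i`-th subtree following `τ i`. These depend on pairwise disjoint finite sets of
independent coordinates, so their probabilities multiply, and relabelling a subtree as the
whole tree preserves the law of the coordinates, which turns the subtree factors into
root-trajectory probabilities.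
-/

noncomputable def majorityUpdate (s : ℝ) (coin : Bool) (σ : ℤ) : ℤ :=
  if 0 < s then 1 else if s < 0 then -1 else if coin then σ else -σ

lemma majorityUpdate_of_ne_zero {s : ℝ} (hs : s ≠ 0) (coin : Bool) (σ : ℤ) :
    majorityUpdate s coin σ = if 0 < s then 1 else -1 := by
  rcases hs.lt_or_gt with h | h
  · simp [majorityUpdate, h, h.not_gt]
  · simp [majorityUpdate, h]

lemma majorityUpdate_eq_one_or_eq_neg_one {σ : ℤ} (hσ : σ = 1 ∨ σ = -1) (s : ℝ) (coin : Bool) :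
    majorityUpdate s coin σ = 1 ∨ majorityUpdate s coin σ = -1 := by
  unfold majorityUpdate
  rcases hσ with rfl | rfl <;> split_ifs <;> simp

section DeterminedBy

variable {ι Ω β : Type*}

def DeterminedBy (G : ι → Ω → β) (F : Finset ι) (E : Set Ω) : Prop :=
  ∀ ⦃x y⦄, (∀ j ∈ F, G j x = G j y) → x ∈ E → y ∈ E

variable {G : ι → Ω → β} {F : Finset ι} {E : Set Ω}

lemma DeterminedBy.exists_eq_preimage (hE : DeterminedBy G F E) :
    ∃ s : Set (F → β), E = (fun x (j : F) => G j x) ⁻¹' s := by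
  refine ⟨(fun x (j : F) => G j x) '' E, Set.Subset.antisymm (fun x hx => ⟨x, hx, rfl⟩) ?_⟩
  rintro y ⟨x, hx, hxy⟩
  exact hE (fun j hj => congrFun hxy ⟨j, hj⟩) hx

lemma DeterminedBy.preimage [DecidableEq ι] {e : ι → ι} {φ : Ω → Ω}
    (hφ : ∀ j x, G j (φ x) = G (e j) x) (hE : DeterminedBy G F E) :
    DeterminedBy G (F.image e) (φ ⁻¹' E) := fun x y hxy hx =>
  hE (fun j hj => by rw [hφ, hφ]; exact hxy _ (Finset.mem_image_of_mem e hj)) hx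

variable [MeasurableSpace Ω] [MeasurableSpace β] {μ : Measure Ω}

lemma DeterminedBy.measurableSet (hG : ∀ j, Measurable (G j)) [Countable β]
    [MeasurableSingletonClass β] (hE : DeterminedBy G F E) : MeasurableSet E := by
  obtain ⟨s, rfl⟩ := hE.exists_eq_preimage
  exact (measurable_pi_lambda (fun x (j : F) => G j x) fun j => hG j)
    s.to_countable.measurableSet

lemma DeterminedBy.measure_inter (hG : ∀ j, Measurable (G j)) (hindep : iIndepFun G μ)
    [Countable β] [MeasurableSingletonClass β] {F₁ F₂ : Finset ι} {E₁ E₂ : Set Ω}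
    (hF : Disjoint F₁ F₂) (h₁ : DeterminedBy G F₁ E₁) (h₂ : DeterminedBy G F₂ E₂) :
    μ (E₁ ∩ E₂) = μ E₁ * μ E₂ := by
  obtain ⟨s₁, rfl⟩ := h₁.exists_eq_preimage
  obtain ⟨s₂, rfl⟩ := h₂.exists_eq_preimage
  exact (hindep.indepFun_finset F₁ F₂ hF hG).measure_inter_preimage_eq_mul s₁ s₂
    s₁.to_countable.measurableSet s₂.to_countable.measurableSet

lemma DeterminedBy.measure_iInter (hG : ∀ j, Measurable (G j)) (hindep : iIndepFun G μ)
    [Countable β] [MeasurableSingletonClass β] {κ : Type*} [Fintype κ] {S : κ → Finset ι}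
    {E : κ → Set Ω} (hS : Pairwise (Function.onFun Disjoint S))
    (hE : ∀ a, DeterminedBy G (S a) (E a)) :
    μ (⋂ a, E a) = ∏ a, μ (E a) := by
  classical
  suffices h : ∀ A : Finset κ, μ (⋂ a ∈ A, E a) = ∏ a ∈ A, μ (E a) by
    simpa using h Finset.univ
  intro A
  induction A using Finset.induction with
  | empty => simp [hindep.isProbabilityMeasure.measure_univ]
  | insert a A ha ih =>
    have hdisj : Disjoint (S a) (A.biUnion S) :=
      (Finset.disjoint_biUnion_right _ _ _).2 fun b hb => hS fun hab => ha (hab ▸ hb)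
    have hA : DeterminedBy G (A.biUnion S) (⋂ b ∈ A, E b) := fun x y hxy hx =>
      Set.mem_iInter₂.2 fun b hb => hE b (fun j hj => hxy j (Finset.mem_biUnion.2 ⟨b, hb, hj⟩))
        (Set.mem_iInter₂.1 hx b hb)
    rw [Finset.set_biInter_insert, Finset.prod_insert ha, (hE a).measure_inter hG hindep hdisj hA,
      ih]

lemma DeterminedBy.measure_preimage (hG : ∀ j, Measurable (G j)) (hindep : iIndepFun G μ)
    [Countable β] [MeasurableSingletonClass β] {e : ι → ι} (he : Function.Injective e)
    {φ : Ω → Ω} (hφ : ∀ j x, G j (φ x) = G (e j) x) (hlaw : ∀ j, μ.map (G (e j)) = μ.map (G j))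
    (hE : DeterminedBy G F E) :
    μ (φ ⁻¹' E) = μ E := by
  obtain ⟨s, rfl⟩ := hE.exists_eq_preimage
  have hs : MeasurableSet s := s.to_countable.measurableSet
  have hlaw_pi : ∀ {g : ι → ι}, Function.Injective g →
      μ.map (fun x (j : F) => G (g j) x) = Measure.pi fun j : F => μ.map (G (g j)) :=
    fun hg => (hindep.precomp (hg.comp Subtype.val_injective)).map_fun_eq_pi_map
      fun j => (hG _).aemeasurable
  have hmeas : ∀ g : ι → ι, Measurable fun x (j : F) => G (g j) x :=
    fun g => measurable_pi_lambda _ fun j => hG _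
  calc μ (φ ⁻¹' ((fun x (j : F) => G j x) ⁻¹' s))
      = μ.map (fun x (j : F) => G (e j) x) s := by
        rw [Measure.map_apply (hmeas e) hs]
        simp only [← Set.preimage_comp, Function.comp_def, hφ]
    _ = μ.map (fun x (j : F) => G (id j) x) s := by
        rw [hlaw_pi he, hlaw_pi Function.injective_id]
        simp only [hlaw, id]
    _ = μ ((fun x (j : F) => G j x) ⁻¹' s) := Measure.map_apply (hmeas id) hs

end DeterminedBy

lemma Kker_nonneg (u : ℝ) (next : ℤ) (s : ℝ) : 0 ≤ Kker u next s := by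
  unfold Kker
  split_ifs <;> norm_num

section BoolLaws

variable {Ω : Type*} [MeasurableSpace Ω] {μ : Measure Ω} [IsProbabilityMeasure μ]

lemma measure_eq_false_eq_one_sub {f : Ω → Bool} (hf : Measurable f) :
    μ {x | f x = false} = 1 - μ {x | f x = true} := by
  have hcompl : {x | f x = false} = (f ⁻¹' {true})ᶜ := by
    ext x
    simp
  rw [hcompl, prob_compl_eq_one_sub (hf (measurableSet_singleton true))]
  rfl

lemma map_eq_map_of_measure_eq_true {f g : Ω → Bool} (hf : Measurable f) (hg : Measurable g)
    (h : μ {x | f x = true} = μ {x | g x = true}) : μ.map f = μ.map g := by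
  refine Measure.ext_iff_singleton.2 fun b => ?_
  rw [Measure.map_apply hf (measurableSet_singleton b),
    Measure.map_apply hg (measurableSet_singleton b)]
  cases b
  · exact (measure_eq_false_eq_one_sub hf).trans (h ▸ (measure_eq_false_eq_one_sub hg).symm)
  · exact h

lemma measure_eq_half_of_fair {coin : Ω → Bool} (hcoin : Measurable coin)
    (hfair : μ {x | coin x = true} = 1 / 2) (b : Bool) : μ {x | coin x = b} = 1 / 2 := by
  cases b
  · rw [measure_eq_false_eq_one_sub hcoin, hfair, one_div, ENNReal.one_sub_inv_two]
  · exact hfair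

lemma measure_majorityUpdate_eq_Kker {coin : Ω → Bool} (hcoin : ∀ b, μ {x | coin x = b} = 1 / 2)
    {ω ω' : ℤ} (hω : ω = 1 ∨ ω = -1) (hω' : ω' = 1 ∨ ω' = -1) (u s : ℝ) :
    μ {x | majorityUpdate (s + u) (coin x) ω = ω'} = ENNReal.ofReal (Kker u ω' s) := by
  by_cases h : s + u = 0
  · have htie : {x | majorityUpdate (s + u) (coin x) ω = ω'} = {x | coin x = decide (ω' = ω)} := by
      ext x
      simp only [majorityUpdate, h, lt_irrefl, if_false, Set.mem_ofPred_eq]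
      rcases hω with rfl | rfl <;> rcases hω' with rfl | rfl <;> cases coin x <;> decide
    rw [htie, hcoin, Kker, if_neg (not_not.2 h), ENNReal.ofReal_div_of_pos two_pos,
      ENNReal.ofReal_one, ENNReal.ofReal_ofNat]
  · simp only [majorityUpdate_of_ne_zero h, Kker, if_pos h]
    rcases lt_or_gt_of_ne h with hneg | hpos
    · rcases hω' with rfl | rfl <;> norm_num [hneg.not_gt]
    · rcases hω' with rfl | rfl <;> norm_num [hpos]

end BoolLaws

section Dynamics

variable {c : ℕ}

def fieldFromAbove (c : ℕ) (u : ℝ) (σ : TVert c → ℤ) : TVert c → ℝ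
  | [] => u
  | _ :: p => σ p

lemma treeStep_eq_majorityUpdate (u : ℝ) (coin : TVert c → Bool) (σ : TVert c → ℤ)
    (v : TVert c) :
    treeStep c u coin σ v =
      majorityUpdate ((∑ j : Fin c, (σ (j :: v) : ℝ)) + fieldFromAbove c u σ v) (coin v) (σ v) := by
  cases v <;> rfl

lemma treeTraj_eq_one_or_eq_neg_one {u : ℕ → ℝ} {coins : ℕ → TVert c → Bool}
    {σ0 : TVert c → ℤ} (h : ∀ v, σ0 v = 1 ∨ σ0 v = -1) (t : ℕ) (v : TVert c) :
    treeTraj c u coins σ0 t v = 1 ∨ treeTraj c u coins σ0 t v = -1 := by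
  induction t generalizing v with
  | zero => exact h v
  | succ t ih =>
    rw [treeTraj, treeStep_eq_majorityUpdate]
    exact majorityUpdate_eq_one_or_eq_neg_one (ih v) _ _

lemma treeTraj_congr_of_depth_le {u : ℕ → ℝ} {coins coins' : ℕ → TVert c → Bool}
    {σ0 σ0' : TVert c → ℤ} (t : ℕ) {n : ℕ}
    (hσ : ∀ w : TVert c, w.length ≤ n + t → σ0 w = σ0' w)
    (hcoin : ∀ s < t, ∀ w : TVert c, w.length ≤ n + t → coins s w = coins' s w)
    {v : TVert c} (hv : v.length ≤ n) :
    treeTraj c u coins σ0 t v = treeTraj c u coins' σ0' t v := by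
  induction t generalizing n v with
  | zero => exact hσ v (by omega)
  | succ t ih =>
    have ih' : ∀ {m w}, m ≤ n + 1 → w.length ≤ m →
        treeTraj c u coins σ0 t w = treeTraj c u coins' σ0' t w := fun hm hw =>
      ih (fun w hw => hσ w (by omega)) (fun s hs w hw => hcoin s (by omega) w (by omega)) hw
    have hfield : fieldFromAbove c (u t) (treeTraj c u coins σ0 t) v =
        fieldFromAbove c (u t) (treeTraj c u coins' σ0' t) v := by
      cases v with
      | nil => rfl
      | cons a p => exact congrArg Int.cast (ih' (w := p) n.le_succ (by simp at hv; omega))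
    rw [treeTraj, treeTraj, treeStep_eq_majorityUpdate, treeStep_eq_majorityUpdate, hfield,
      hcoin t (by omega) v (by omega), ih' (Nat.le_succ n) hv]
    congr 3 with j
    rw [ih' le_rfl (by simp; omega)]

lemma treeTraj_root_congr {u : ℕ → ℝ} {coins coins' : ℕ → TVert c → Bool}
    {σ0 σ0' : TVert c → ℤ} (t : ℕ)
    (hσ : ∀ w : TVert c, w.length ≤ t → σ0 w = σ0' w)
    (hcoin : ∀ s < t, ∀ w : TVert c, w.length ≤ t → coins s w = coins' s w) :
    treeTraj c u coins σ0 t [] = treeTraj c u coins' σ0' t [] :=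
  treeTraj_congr_of_depth_le (n := 0) t (by simpa using hσ) (by simpa using hcoin) le_rfl

lemma treeTraj_append_singleton {u : ℕ → ℝ} {coins : ℕ → TVert c → Bool}
    {σ0 : TVert c → ℤ} {ωr : ℕ → ℤ} (i : Fin c) (t : ℕ)
    (hroot : ∀ s < t, treeTraj c u coins σ0 s [] = ωr s) (v : TVert c) :
    treeTraj c u coins σ0 t (v ++ [i]) =
      treeTraj c (fun s => (ωr s : ℝ)) (fun s w => coins s (w ++ [i]))
        (fun w => σ0 (w ++ [i])) t v := by
  induction t generalizing v with
  | zero => rfl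
  | succ t ih =>
    have ih' := ih fun s hs => hroot s (by omega)
    have hfield : fieldFromAbove c (u t) (treeTraj c u coins σ0 t) (v ++ [i]) =
        fieldFromAbove c (ωr t) (treeTraj c (fun s => (ωr s : ℝ))
          (fun s w => coins s (w ++ [i])) (fun w => σ0 (w ++ [i])) t) v := by
      cases v with
      | nil => exact congrArg Int.cast (hroot t (by omega))
      | cons a p => exact congrArg Int.cast (ih' p)
    rw [treeTraj, treeTraj, treeStep_eq_majorityUpdate, treeStep_eq_majorityUpdate, hfield, ih' v]
    congr 3 with j
    rw [← ih' (j :: v)]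
    rfl

end Dynamics

lemma btrajZ_cast {n : ℕ} (f : Fin n → Bool) (t : ℕ) : (btrajZ f t : ℝ) = btrajR f t := by
  unfold btrajZ btrajR
  split_ifs <;> norm_num

lemma btrajZ_injective {n : ℕ} : Function.Injective (btrajZ (n := n)) := by
  intro f g h
  funext t
  have ht := congrFun h t
  simp only [btrajZ, dif_pos t.isLt] at ht
  revert ht
  cases f t <;> cases g t <;> decide

lemma btrajZ_decide {n : ℕ} {ω : ℕ → ℤ} {t : ℕ} (ht : t < n) (hω : ω t = 1 ∨ ω t = -1) :
    btrajZ (fun s : Fin n => decide (ω s = 1)) t = ω t := by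
  rcases hω with h | h <;> simp [btrajZ, ht, h]

section Sample

variable {c T : ℕ}

/-- The initial spins (`true` encodes `+1`) and the tie-breaking coins, `x.2 t v` being the coin
of the vertex `v` at time `t`. -/
abbrev Sample (c : ℕ) := (TVert c → Bool) × (ℕ → TVert c → Bool)

abbrev Coord (c : ℕ) := TVert c ⊕ (ℕ × TVert c)

def coord (c : ℕ) : Coord c → Sample c → Bool :=
  Sum.elim (fun v x => x.1 v) (fun q x => x.2 q.1 q.2)

def initSpins (x : Sample c) (v : TVert c) : ℤ := if x.1 v then 1 else -1

noncomputable def rootSpin (u : ℕ → ℝ) (x : Sample c) (t : ℕ) : ℤ :=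
  treeTraj c u x.2 (initSpins x) t []

def trajEvent (c T : ℕ) (u : ℕ → ℝ) (ω : ℕ → ℤ) : Set (Sample c) :=
  {x | ∀ t ≤ T, rootSpin u x t = ω t}

/-- The vertices below the root's child `i` are the lists ending in `i`. -/
def childSample (i : Fin c) (x : Sample c) : Sample c :=
  (fun w => x.1 (w ++ [i]), fun s w => x.2 s (w ++ [i]))

lemma rootSpin_eq_one_or_eq_neg_one (u : ℕ → ℝ) (x : Sample c) (t : ℕ) :
    rootSpin u x t = 1 ∨ rootSpin u x t = -1 :=
  treeTraj_eq_one_or_eq_neg_one (fun v => by unfold initSpins; split_ifs <;> simp) t []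

lemma rootSpin_succ {u : ℕ → ℝ} {ωr : ℕ → ℤ} {x : Sample c} {t : ℕ}
    (hroot : ∀ s < t, rootSpin u x s = ωr s) :
    rootSpin u x (t + 1) = majorityUpdate
      ((∑ i, (rootSpin (fun s => (ωr s : ℝ)) (childSample i x) t : ℝ)) + u t)
      (x.2 t []) (rootSpin u x t) := by
  rw [rootSpin, treeTraj, treeStep_eq_majorityUpdate]
  congr 4 with i
  exact congrArg Int.cast (treeTraj_append_singleton i t hroot [])

noncomputable def cavityBlock (T : ℕ) (u : ℕ → ℝ) (ωr : ℕ → ℤ) (τ : Fin c → Fin (T + 1) → Bool) :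
    Option (Fin (T + 1) ⊕ Fin c) → Set (Sample c)
  | none => {x | initSpins x [] = ωr 0}
  | some (.inl t) =>
    {x | majorityUpdate ((∑ i, btrajR (τ i) t) + u t) (x.2 t []) (ωr t) = ωr (t + 1)}
  | some (.inr i) => childSample i ⁻¹' trajEvent c T (fun s => ωr s) (btrajZ (τ i))

lemma rootSpin_succ_of_mem_cavityBlock {u : ℕ → ℝ} {ωr : ℕ → ℤ}
    {τ : Fin c → Fin (T + 1) → Bool} {x : Sample c}
    (hchild : ∀ i, x ∈ cavityBlock T u ωr τ (some (.inr i))) {t : ℕ} (ht : t ≤ T)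
    (hroot : ∀ s ≤ t, rootSpin u x s = ωr s) :
    rootSpin u x (t + 1) = majorityUpdate ((∑ i, btrajR (τ i) t) + u t) (x.2 t []) (ωr t) := by
  rw [rootSpin_succ fun s hs => hroot s hs.le, hroot t le_rfl]
  congr 2
  refine Finset.sum_congr rfl fun i _ => ?_
  rw [hchild i t ht, btrajZ_cast]

lemma trajEvent_succ_eq_iUnion (u : ℕ → ℝ) (ωr : ℕ → ℤ) :
    trajEvent c (T + 1) u ωr =
      ⋃ τ : Fin c → Fin (T + 1) → Bool, ⋂ a, cavityBlock T u ωr τ a := by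
  ext x
  simp only [Set.mem_iUnion, Set.mem_iInter, Option.forall, Sum.forall]
  constructor
  · intro hx
    let τ : Fin c → Fin (T + 1) → Bool :=
      fun i t => decide (rootSpin (fun s => (ωr s : ℝ)) (childSample i x) t = 1)
    have hchild : ∀ i, x ∈ cavityBlock T u ωr τ (some (.inr i)) := fun i t ht =>
      (btrajZ_decide (Nat.lt_succ_of_le ht) (rootSpin_eq_one_or_eq_neg_one _ _ t)).symm
    refine ⟨τ, hx 0 (Nat.zero_le _), fun t => ?_, hchild⟩
    rw [cavityBlock, Set.mem_ofPred_eq, ← rootSpin_succ_of_mem_cavityBlock hchild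
      (Nat.lt_succ_iff.1 t.isLt) fun s hs => hx s (by omega)]
    exact hx _ (by omega)
  · rintro ⟨τ, hinit, hstep, hchild⟩ t
    induction t using Nat.strong_induction_on with
    | _ t ih =>
      intro ht
      cases t with
      | zero => exact hinit
      | succ t =>
        rw [rootSpin_succ_of_mem_cavityBlock hchild (by omega)
          fun s hs => ih s (by omega) (by omega)]
        exact hstep ⟨t, by omega⟩

lemma pairwise_disjoint_iInter_cavityBlock (u : ℕ → ℝ) (ωr : ℕ → ℤ) :
    Pairwise (Function.onFun Disjoint fun τ : Fin c → Fin (T + 1) → Bool =>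
      ⋂ a, cavityBlock T u ωr τ a) := by
  refine fun τ τ' hne => Set.disjoint_left.2 fun x hx hx' => hne (funext fun i => ?_)
  refine btrajZ_injective (funext fun t => ?_)
  rcases le_or_gt t T with ht | ht
  · rw [← Set.mem_iInter.1 hx (some (.inr i)) t ht, Set.mem_iInter.1 hx' (some (.inr i)) t ht]
  · simp [btrajZ, show ¬ t < T + 1 by omega]

end Sample

section Coordinates

variable {c T : ℕ}

def depthBall (c n : ℕ) : Finset (TVert c) :=
  (Finset.range (n + 1)).biUnion fun m => Finset.univ.image (List.ofFn : (Fin m → Fin c) → TVert c)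

lemma mem_depthBall {n : ℕ} {w : TVert c} : w ∈ depthBall c n ↔ w.length ≤ n := by
  simp only [depthBall, Finset.mem_biUnion, Finset.mem_range, Finset.mem_image, Finset.mem_univ,
    true_and]
  constructor
  · rintro ⟨m, hm, f, rfl⟩
    simpa using Nat.lt_succ_iff.1 hm
  · exact fun hw => ⟨w.length, Nat.lt_succ_of_le hw, w.get, List.ofFn_get w⟩

def rootCoords (c T : ℕ) : Finset (Coord c) :=
  (depthBall c T).disjSum (Finset.range T ×ˢ depthBall c T)

lemma trajEvent_determinedBy (u : ℕ → ℝ) (ω : ℕ → ℤ) :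
    DeterminedBy (coord c) (rootCoords c T) (trajEvent c T u ω) := by
  intro x y hxy hx t ht
  rw [← hx t ht]
  refine treeTraj_root_congr t (fun w hw => ?_) (fun s hs w hw => ?_)
  · have : y.1 w = x.1 w :=
      (hxy (.inl w) (Finset.inl_mem_disjSum.2 (mem_depthBall.2 (hw.trans ht)))).symm
    simp only [initSpins, this]
  · exact (hxy (.inr (s, w)) (Finset.inr_mem_disjSum.2 (Finset.mem_product.2
      ⟨Finset.mem_range.2 (by omega), mem_depthBall.2 (hw.trans ht)⟩))).symm

def childCoord (i : Fin c) : Coord c → Coord c :=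
  Sum.map (· ++ [i]) (Prod.map id (· ++ [i]))

lemma childCoord_injective (i : Fin c) : Function.Injective (childCoord i) :=
  Sum.map_injective.2 ⟨List.append_left_injective _,
    Prod.map_injective.2 ⟨Function.injective_id, List.append_left_injective _⟩⟩

lemma childCoord_ne_inl_nil (i : Fin c) (j : Coord c) : childCoord i j ≠ .inl [] := by
  cases j <;> simp [childCoord]

lemma childCoord_ne_inr_nil (i : Fin c) (j : Coord c) (t : ℕ) : childCoord i j ≠ .inr (t, []) := by
  rcases j with _ | ⟨_, _⟩ <;> simp [childCoord]

lemma eq_of_childCoord_eq {i i' : Fin c} {j j' : Coord c} (h : childCoord i j = childCoord i' j') :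
    i = i' := by
  rcases j with _ | ⟨_, _⟩ <;> rcases j' with _ | ⟨_, _⟩ <;> simp [childCoord] at h <;> tauto

lemma coord_childSample (i : Fin c) (j : Coord c) (x : Sample c) :
    coord c j (childSample i x) = coord c (childCoord i j) x := by
  cases j <;> rfl

lemma measurable_coord (j : Coord c) : Measurable (coord c j) := by
  rcases j with v | ⟨s, w⟩
  · exact (measurable_pi_apply v).comp measurable_fst
  · exact (measurable_pi_apply w).comp ((measurable_pi_apply s).comp measurable_snd)

def cavityCoords (T : ℕ) : Option (Fin (T + 1) ⊕ Fin c) → Finset (Coord c)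
  | none => {.inl []}
  | some (.inl t) => {.inr (t, [])}
  | some (.inr i) => (rootCoords c T).image (childCoord i)

-- The coordinates of the `i`-th subtree block sit at vertices ending in `i`, those of the other
-- blocks at the root.
lemma pairwise_disjoint_cavityCoords :
    Pairwise (Function.onFun Disjoint (cavityCoords (c := c) T)) := by
  rintro (_ | t | i) (_ | t' | i') hne <;>
    simp only [Function.onFun, cavityCoords, Finset.disjoint_singleton_left,
      Finset.disjoint_singleton_right, Finset.mem_singleton, Finset.mem_image, not_exists,
      not_and, reduceCtorEq, not_false_eq_true]
  all_goals first
    | exact absurd rfl hne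
    | exact fun j _ => childCoord_ne_inl_nil _ j
    | exact fun j _ => childCoord_ne_inr_nil _ j _
    | exact fun h => hne (congrArg (some ∘ Sum.inl) (Fin.ext (by simp at h; exact h.symm)))
    | exact Finset.disjoint_left.2 fun _ hj hj' => by
        obtain ⟨j, -, rfl⟩ := Finset.mem_image.1 hj
        obtain ⟨j', -, h⟩ := Finset.mem_image.1 hj'
        exact hne (by rw [eq_of_childCoord_eq h])

lemma cavityBlock_determinedBy (u : ℕ → ℝ) (ωr : ℕ → ℤ) (τ : Fin c → Fin (T + 1) → Bool)
    (a : Option (Fin (T + 1) ⊕ Fin c)) :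
    DeterminedBy (coord c) (cavityCoords T a) (cavityBlock T u ωr τ a) := by
  rcases a with _ | t | i
  · intro x y hxy hx
    have : x.1 [] = y.1 [] := hxy (.inl []) (Finset.mem_singleton_self _)
    simpa only [cavityBlock, Set.mem_ofPred_eq, initSpins, this] using hx
  · intro x y hxy hx
    have : x.2 t [] = y.2 t [] := hxy (.inr (t, [])) (Finset.mem_singleton_self _)
    simpa only [cavityBlock, Set.mem_ofPred_eq, this] using hx
  · exact (trajEvent_determinedBy _ _).preimage (coord_childSample i)

end Coordinates

section Probability

variable {c T : ℕ} {μ : Measure (Sample c)} {u : ℕ → ℝ} {ωr : ℕ → ℤ}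

lemma measure_trajEvent_succ (hindep : iIndepFun (coord c) μ) :
    μ (trajEvent c (T + 1) u ωr) =
      ∑ τ : Fin c → Fin (T + 1) → Bool, ∏ a, μ (cavityBlock T u ωr τ a) := by
  have hdet := cavityBlock_determinedBy (c := c) (T := T) u ωr
  rw [trajEvent_succ_eq_iUnion, measure_iUnion (pairwise_disjoint_iInter_cavityBlock u ωr)
    fun τ => .iInter fun a => (hdet τ a).measurableSet measurable_coord, tsum_fintype]
  exact Finset.sum_congr rfl fun τ _ =>
    DeterminedBy.measure_iInter measurable_coord hindep pairwise_disjoint_cavityCoords (hdet τ)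

variable [IsProbabilityMeasure μ]

lemma measure_cavityBlock_root {p : ℝ} (hp : p ∈ Set.Icc (0 : ℝ) 1)
    (hinit : ∀ v, μ {x | x.1 v = true} = ENNReal.ofReal p) (hω : ωr 0 = 1 ∨ ωr 0 = -1)
    (τ : Fin c → Fin (T + 1) → Bool) :
    (μ (cavityBlock T u ωr τ none)).toReal = if ωr 0 = 1 then p else 1 - p := by
  rcases hω with h | h
  · have hblock : cavityBlock T u ωr τ none = {x | x.1 [] = true} := by
      ext x
      cases hx : x.1 [] <;> simp [cavityBlock, initSpins, hx, h]
    rw [hblock, hinit, if_pos h, ENNReal.toReal_ofReal hp.1]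
  · have hblock : cavityBlock T u ωr τ none = {x | x.1 [] = false} := by
      ext x
      cases hx : x.1 [] <;> simp [cavityBlock, initSpins, hx, h]
    rw [hblock, measure_eq_false_eq_one_sub (f := fun x : Sample c => x.1 [])
      (measurable_coord (.inl [])), hinit, if_neg (by omega), ← ENNReal.ofReal_one,
      ← ENNReal.ofReal_sub _ hp.1, ENNReal.toReal_ofReal (by linarith [hp.2])]

lemma measure_cavityBlock_step (hfair : ∀ t v, μ {x | x.2 t v = true} = 1 / 2)
    (τ : Fin c → Fin (T + 1) → Bool) (t : Fin (T + 1))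
    (h₀ : ωr t = 1 ∨ ωr t = -1) (h₁ : ωr (t + 1) = 1 ∨ ωr (t + 1) = -1) :
    μ (cavityBlock T u ωr τ (some (.inl t))) =
      ENNReal.ofReal (Kker (u t) (ωr (t + 1)) (∑ i, btrajR (τ i) t)) :=
  measure_majorityUpdate_eq_Kker
    (measure_eq_half_of_fair (measurable_coord (.inr (t, []))) (hfair t [])) h₀ h₁ _ _

lemma measure_cavityBlock_child (hindep : iIndepFun (coord c) μ) {p : ℝ}
    (hinit : ∀ v, μ {x | x.1 v = true} = ENNReal.ofReal p)
    (hfair : ∀ t v, μ {x | x.2 t v = true} = 1 / 2) (τ : Fin c → Fin (T + 1) → Bool) (i : Fin c) :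
    μ (cavityBlock T u ωr τ (some (.inr i))) =
      μ (trajEvent c T (fun t => ωr t) (btrajZ (τ i))) := by
  refine (trajEvent_determinedBy _ _).measure_preimage measurable_coord hindep
    (childCoord_injective i) (coord_childSample i) fun j => ?_
  refine map_eq_map_of_measure_eq_true (measurable_coord _) (measurable_coord _) ?_
  rcases j with w | ⟨s, w⟩
  · exact (hinit _).trans (hinit w).symm
  · exact (hfair _ _).trans (hfair s w).symm

end Probability

theorem exact_cavity_recursion_general (k : ℕ) (p : ℝ) (hp : p ∈ Set.Icc (0:ℝ) 1)
    (μ : Measure ((TVert (k - 1) → Bool) × (ℕ → TVert (k - 1) → Bool)))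
    [IsProbabilityMeasure μ]
    (hindep : iIndepFun (β := fun _ : TVert (k - 1) ⊕ (ℕ × TVert (k - 1)) => Bool)
      (Sum.elim (fun v x => x.1 v) (fun q x => x.2 q.1 q.2)) μ)
    (hinit : ∀ v, μ {x | x.1 v = true} = ENNReal.ofReal p)
    (hfair : ∀ t v, μ {x | x.2 t v = true} = 1/2)
    (T : ℕ) (u : ℕ → ℝ) (ωr : ℕ → ℤ) (hωr : ∀ t ≤ T + 1, ωr t = 1 ∨ ωr t = -1) :
    rootProb (k - 1) μ (T + 1) u ωr =
      (if ωr 0 = 1 then p else 1 - p) *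
        ∑ τ : Fin (k - 1) → (Fin (T + 1) → Bool),
          (∏ t ∈ Finset.range (T + 1),
            Kker (u t) (ωr (t + 1)) (∑ i, btrajR (τ i) t)) *
          ∏ i, rootProb (k - 1) μ T (fun t => (ωr t : ℝ)) (fun t => btrajZ (τ i) t) := by
  change (μ (trajEvent (k - 1) (T + 1) u ωr)).toReal = _
  rw [measure_trajEvent_succ hindep,
    ENNReal.toReal_sum fun τ _ => ENNReal.prod_ne_top fun a _ => measure_ne_top μ _,
    Finset.mul_sum]
  refine Finset.sum_congr rfl fun τ _ => ?_
  rw [Fintype.prod_option, Fintype.prod_sum_type, ENNReal.toReal_mul, ENNReal.toReal_mul,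
    measure_cavityBlock_root hp hinit (hωr 0 (Nat.zero_le _)), ENNReal.toReal_prod,
    ENNReal.toReal_prod, ← Fin.prod_univ_eq_prod_range]
  congr 2
  · refine Finset.prod_congr rfl fun t _ => ?_
    rw [measure_cavityBlock_step hfair τ t (hωr t (by omega)) (hωr (t + 1) (by omega)),
      ENNReal.toReal_ofReal (Kker_nonneg _ _ _)]
  · exact Finset.prod_congr rfl fun i _ => by rw [measure_cavityBlock_child hindep hinit hfair]; rfl

/-- the exact cavity recursion.  For the majority process on the rooted
tree G_∘ (root degree k−1, all other degrees k) with i.i.d. initialization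
(P_0(+1) = p) and external field u at the root, the law of the root trajectory
satisfies
P((σ_∘)_0^{T+1} || u) = P_0(σ_∘(0)) Σ_{(σ_1)_0^T,…,(σ_{k−1})_0^T}
  Π_{t=0}^T K_{u(t)}(σ_∘(t+1) | σ_{∂∘}(t)) Π_{i=1}^{k−1} P((σ_i)_0^T || (σ_∘)_0^T),
where each subtree trajectory is distributed as a root trajectory whose external
field is the root trajectory itself. -/
theorem exact_cavity_recursion (k : ℕ) (hk : 2 ≤ k) (p : ℝ) (hp : p ∈ Set.Icc (0:ℝ) 1)
    (μ : Measure ((TVert (k - 1) → Bool) × (ℕ → TVert (k - 1) → Bool)))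
    [IsProbabilityMeasure μ]
    (hindep : iIndepFun (β := fun _ : TVert (k - 1) ⊕ (ℕ × TVert (k - 1)) => Bool)
      (Sum.elim (fun v x => x.1 v) (fun q x => x.2 q.1 q.2)) μ)
    (hinit : ∀ v, μ {x | x.1 v = true} = ENNReal.ofReal p)
    (hfair : ∀ t v, μ {x | x.2 t v = true} = 1/2)
    (T : ℕ) (u : ℕ → ℝ) (ωr : ℕ → ℤ) (hωr : ∀ t ≤ T + 1, ωr t = 1 ∨ ωr t = -1) :
    rootProb (k - 1) μ (T + 1) u ωr =
      (if ωr 0 = 1 then p else 1 - p) *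
        ∑ τ : Fin (k - 1) → (Fin (T + 1) → Bool),
          (∏ t ∈ Finset.range (T + 1),
            Kker (u t) (ωr (t + 1)) (∑ i, btrajR (τ i) t)) *
          ∏ i, rootProb (k - 1) μ T (fun t => (ωr t : ℝ)) (fun t => btrajZ (τ i) t) :=
  exact_cavity_recursion_general k p hp μ hindep hinit hfair T u ωr hωr
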